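/- There exists a unique Witt vector b ∈ 𝕎(R) such that for every n ≥ 0 the n-th ghost component of b equals 1 + ε·[p^n]_{q^{p^α}} · ∑_{i=1}^{p−1} q^{i·p^{n+α}−1}·[i·p^α]_{q^{p^{α+n+1}}}. Moreover b is a unit of 𝕎(R). (This is the ghost-component description of the element b of Proposition 3.2, which satisfies g̃([p]_{q^{p^α}}) = f̃([p]_{q^{p^α}})·b for the δ-ring lifts g̃, f̃ of ψ and the inclusion A → R.) -/

import Mathlib

open Finset

/-- The q-analogue `[n]_t = ∑_{i=0}^{n-1} t^i`. -/
def qan {A : Type*} [CommRing A] (t : A) (n : ℕ) : A := ∑ i ∈ Finset.range n, t ^ i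

/-- `A := W(k)⟦q−1⟧`, the power series ring over the `p`-typical Witt vectors of `k`;
`q` denotes `1` plus the power series variable. -/
noncomputable def qq (p : ℕ) [Fact p.Prime] (k : Type*) [CommRing k] :
    PowerSeries (WittVector p k) :=
  1 + PowerSeries.X

/-- The distinguished element `d := [p]_{q^{p^α}}` of `A`. -/
noncomputable def dd (p α : ℕ) [Fact p.Prime] (k : Type*) [CommRing k] :
    PowerSeries (WittVector p k) :=
  qan ((qq p k) ^ p ^ α) p

/-- The polynomial `ε² − q·(q^{p^α}−1)·ε` over `A`, whose adjunction defines `R`. -/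
noncomputable def relPoly (p α : ℕ) [Fact p.Prime] (k : Type*) [CommRing k] :
    Polynomial (PowerSeries (WittVector p k)) :=
  Polynomial.X ^ 2 - Polynomial.C (qq p k * ((qq p k) ^ p ^ α - 1)) * Polynomial.X

/-- `R := A[ε]/(ε² − q·(q^{p^α}−1)·ε)`, a free `A`-module with basis `1, ε`. -/
noncomputable abbrev Rring (p α : ℕ) [Fact p.Prime] (k : Type*) [CommRing k] :=
  AdjoinRoot (relPoly p α k)

/-- `ε ∈ R`. -/
noncomputable def eps (p α : ℕ) [Fact p.Prime] (k : Type*) [CommRing k] : Rring p α k :=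
  AdjoinRoot.root (relPoly p α k)

/-!
Everything is computed in a universal model: `ℤ[X]` localized at the polynomials with value `1`
at `X = 1`, with `ε` adjoined subject to `ε² = λε`, `λ = X (X^{p^α} - 1)`; it maps to `R` by
`X ↦ q`. The model carries a Frobenius lift `φ` with `X ↦ X^p` and `ε ↦ με`,
`μ = X^{p-1} [p]_{X^{p^α}}`: this respects the relation because `μλ = φ(λ)`, and lifts Frobenius
because `μ ≡ λ^{p-1} (mod p)`. The elements `gₙ = 1 + ε tₙ` mapping to the prescribed ghost
components satisfy `φ(gₙ) = gₙ₊₁`, since `μ φ(tₙ) = tₙ₊₁`. By Dwork's lemma `(φⁿ g₀)` and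
`(φⁿ g₀⁻¹)` are ghost vectors of Witt vectors over the model, and `g₀` is a unit there; their images
in `𝕎(R)` are inverse to each other. Uniqueness holds because `R` is free over the `p`-torsion free
ring `A`, so the ghost map of `𝕎(R)` is injective.
-/

open Polynomial

section FrobeniusLift

variable (p : ℕ) {S : Type*} [CommRing S]

def IsFrobeniusLift (φ : S →+* S) : Prop := ∀ x, (p : S) ∣ φ x - x ^ p

variable {p} (φ : S →+* S)

theorem dvd_map_add_sub_pow [Fact p.Prime] {x y : S} (hx : (p : S) ∣ φ x - x ^ p)
    (hy : (p : S) ∣ φ y - y ^ p) : (p : S) ∣ φ (x + y) - (x + y) ^ p := by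
  obtain ⟨r, hr⟩ := exists_add_pow_prime_eq (Fact.out : p.Prime) x y
  rw [map_add, hr, show φ x + φ y - (x ^ p + y ^ p + p * x * y * r) =
    (φ x - x ^ p) + (φ y - y ^ p) - p * (x * y * r) by ring]
  exact dvd_sub (dvd_add hx hy) (dvd_mul_right _ _)

theorem dvd_map_mul_sub_pow {x y : S} (hx : (p : S) ∣ φ x - x ^ p)
    (hy : (p : S) ∣ φ y - y ^ p) : (p : S) ∣ φ (x * y) - (x * y) ^ p := by
  rw [map_mul, mul_pow, show φ x * φ y - x ^ p * y ^ p =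
    φ x * (φ y - y ^ p) + y ^ p * (φ x - x ^ p) by ring]
  exact dvd_add (hy.mul_left _) (hx.mul_left _)

theorem dvd_map_sub_pow_of_mul_eq_one {x y : S} (hxy : x * y = 1)
    (hx : (p : S) ∣ φ x - x ^ p) : (p : S) ∣ φ y - y ^ p := by
  have hφ : φ x * φ y = 1 := by rw [← map_mul, hxy, map_one]
  have hpow : x ^ p * y ^ p = 1 := by rw [← mul_pow, hxy, one_pow]
  rw [show φ y - y ^ p = φ y * y ^ p * -(φ x - x ^ p) by
    linear_combination -φ y * hpow + y ^ p * hφ]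
  exact (dvd_neg.mpr hx).mul_left _

theorem pow_succ_dvd_map_sum_sub_sum (hφ : IsFrobeniusLift p φ) (c : ℕ → S) (n : ℕ) :
    (p : S) ^ (n + 1) ∣ φ (∑ i ∈ Finset.range (n + 1), (p : S) ^ i * c i ^ p ^ (n - i)) -
      ∑ i ∈ Finset.range (n + 1), (p : S) ^ i * c i ^ p ^ (n + 1 - i) := by
  rw [map_sum, ← Finset.sum_sub_distrib]
  refine Finset.dvd_sum fun i hi => ?_
  have hin : i ≤ n := Nat.lt_succ_iff.mp (Finset.mem_range.mp hi)
  rw [map_mul, map_pow, map_pow, map_natCast, ← mul_sub,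
    show c i ^ p ^ (n + 1 - i) = (c i ^ p) ^ p ^ (n - i) by
      rw [← pow_mul, ← pow_succ', show n + 1 - i = n - i + 1 by omega],
    show n + 1 = i + (n - i + 1) by omega, pow_add]
  exact mul_dvd_mul_left _ (dvd_sub_pow_of_dvd_sub (hφ _) _)

open scoped Classical in
/-- Dwork's recursion for the Witt coordinates of the ghost vector `(φ^[n] g)ₙ`; the junk value `0`
is never taken when `φ` is a Frobenius lift (`sum_dworkCoeff`). -/
noncomputable def dworkCoeff (p : ℕ) (φ : S →+* S) (g : S) (n : ℕ) : S :=
  if h : (p : S) ^ n ∣ φ^[n] g - ∑ i : Fin n, (p : S) ^ (i : ℕ) * dworkCoeff p φ g i ^ p ^ (n - i)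
  then h.choose else 0

theorem pow_mul_dworkCoeff (g : S) (n : ℕ)
    (h : (p : S) ^ n ∣
      φ^[n] g - ∑ i ∈ Finset.range n, (p : S) ^ i * dworkCoeff p φ g i ^ p ^ (n - i)) :
    (p : S) ^ n * dworkCoeff p φ g n =
      φ^[n] g - ∑ i ∈ Finset.range n, (p : S) ^ i * dworkCoeff p φ g i ^ p ^ (n - i) := by
  rw [← Fin.sum_univ_eq_sum_range (fun i => (p : S) ^ i * dworkCoeff p φ g i ^ p ^ (n - i))] at h ⊢
  rw [dworkCoeff, dif_pos h]
  exact h.choose_spec.symm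

theorem sum_dworkCoeff (hφ : IsFrobeniusLift p φ) (g : S) (n : ℕ) :
    ∑ i ∈ Finset.range (n + 1), (p : S) ^ i * dworkCoeff p φ g i ^ p ^ (n - i) = φ^[n] g := by
  induction n with
  | zero => simpa using pow_mul_dworkCoeff φ g 0 (by simp)
  | succ n ih =>
    have hdvd := pow_succ_dvd_map_sum_sub_sum φ hφ (dworkCoeff p φ g) n
    rw [ih, ← Function.iterate_succ_apply' φ] at hdvd
    rw [Finset.sum_range_succ, Nat.sub_self, pow_zero, pow_one, pow_mul_dworkCoeff φ g _ hdvd]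
    ring

theorem WittVector.exists_ghostComponent_eq_iterate [Fact p.Prime] (hφ : IsFrobeniusLift p φ)
    (g : S) : ∃ b : WittVector p S, ∀ n, WittVector.ghostComponent n b = φ^[n] g :=
  ⟨WittVector.mk p (dworkCoeff p φ g), fun n => by
    rw [WittVector.ghostComponent_apply, aeval_wittPolynomial]
    exact sum_dworkCoeff φ hφ g n⟩

end FrobeniusLift

namespace WittVector

variable {p : ℕ} [Fact p.Prime] {S T : Type*} [CommRing S] [CommRing T]

theorem ghostComponent_map (f : S →+* T) (x : WittVector p S) (n : ℕ) :
    ghostComponent n (map f x) = f (ghostComponent n x) := by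
  simp only [ghostComponent_apply, aeval_wittPolynomial, map_sum, map_mul, map_pow, map_natCast,
    map_coeff]

theorem ext_ghostComponent (hp : IsLeftRegular (p : T)) {x y : WittVector p T}
    (h : ∀ n, ghostComponent n x = ghostComponent n y) : x = y := by
  ext n
  induction n using Nat.strong_induction_on with
  | _ n ih =>
    have hn := h n
    simp only [ghostComponent_apply, aeval_wittPolynomial, Finset.sum_range_succ, Nat.sub_self,
      pow_zero, pow_one] at hn
    rw [Finset.sum_congr rfl fun i hi => by rw [ih i (Finset.mem_range.mp hi)]] at hn
    exact (hp.pow n) (add_left_cancel hn)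

theorem exists_isUnit_ghostComponent_eq_map_iterate {φ : S →+* S} (hφ : IsFrobeniusLift p φ)
    (f : S →+* T) (hT : IsLeftRegular (p : T)) {g : S} (hg : IsUnit g) :
    ∃ b : WittVector p T, IsUnit b ∧ ∀ n, ghostComponent n b = f (φ^[n] g) := by
  obtain ⟨b, hb⟩ := exists_ghostComponent_eq_iterate φ hφ g
  obtain ⟨b', hb'⟩ := exists_ghostComponent_eq_iterate φ hφ ↑hg.unit⁻¹
  refine ⟨map f b, IsUnit.of_mul_eq_one (map f b') ?_, fun n => by rw [ghostComponent_map, hb]⟩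
  refine ext_ghostComponent hT fun n => ?_
  rw [map_mul, map_one, ghostComponent_map, ghostComponent_map, hb, hb', ← map_mul,
    ← iterate_map_mul, hg.mul_val_inv, iterate_map_one, map_one]

end WittVector

section FrobeniusLiftExtension

variable {p : ℕ} {S S' : Type*} [CommRing S] [CommRing S'] {φ : S →+* S}

theorem IsFrobeniusLift.dvd_map_sub_pow_of_comp (hφ : IsFrobeniusLift p φ) (j : S →+* S')
    {ψ : S' →+* S'} (hψ : ψ.comp j = j.comp φ) (x : S) : (p : S') ∣ ψ (j x) - j x ^ p := by
  obtain ⟨c, hc⟩ := hφ x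
  refine ⟨j c, ?_⟩
  rw [← RingHom.comp_apply, hψ, RingHom.comp_apply, ← map_pow, ← map_sub, hc, map_mul, map_natCast]

theorem IsFrobeniusLift.isLocalization_map (hφ : IsFrobeniusLift p φ)
    {M : Submonoid S} [Algebra S S'] [IsLocalization M S'] (hM : M ≤ M.comap φ) :
    IsFrobeniusLift p (IsLocalization.map S' φ hM : S' →+* S') := by
  have hcomp := IsLocalization.map_comp (S := S') (Q := S') hM
  intro x
  obtain ⟨⟨r, s⟩, rfl⟩ := IsLocalization.mk'_surjective M x
  dsimp only
  rw [IsLocalization.mk'_eq_mul_mk'_one]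
  refine dvd_map_mul_sub_pow _ (hφ.dvd_map_sub_pow_of_comp _ hcomp r) ?_
  refine dvd_map_sub_pow_of_mul_eq_one _ ?_ (hφ.dvd_map_sub_pow_of_comp _ hcomp s)
  rw [mul_comm, IsLocalization.mk'_spec, map_one]

theorem IsFrobeniusLift.adjoinRoot [Fact p.Prime] (hφ : IsFrobeniusLift p φ) {f : S[X]}
    {ψ : AdjoinRoot f →+* AdjoinRoot f} (hψ : ψ.comp (AdjoinRoot.of f) = (AdjoinRoot.of f).comp φ)
    (hroot : (p : AdjoinRoot f) ∣ ψ (AdjoinRoot.root f) - AdjoinRoot.root f ^ p) :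
    IsFrobeniusLift p ψ := by
  intro x
  induction x using AdjoinRoot.induction_on with
  | ih g =>
    induction g using Polynomial.induction_on with
    | C c => rw [AdjoinRoot.mk_C]; exact hφ.dvd_map_sub_pow_of_comp _ hψ c
    | add g h hg hh => rw [map_add]; exact dvd_map_add_sub_pow ψ hg hh
    | monomial n c h =>
      rw [pow_succ, ← mul_assoc, map_mul, AdjoinRoot.mk_X]
      exact dvd_map_mul_sub_pow ψ h hroot

end FrobeniusLiftExtension

namespace AdjoinRoot

variable {S : Type*} [CommRing S] {a : S}

theorem root_sq_eq_of_mul_root : root (X ^ 2 - C a * X) ^ 2 = of _ a * root (X ^ 2 - C a * X) := by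
  have h := mk_self (f := X ^ 2 - C a * X)
  rwa [map_sub, map_mul, map_pow, mk_X, mk_C, sub_eq_zero] at h

theorem root_pow_succ_eq_of_pow_mul_root (m : ℕ) :
    root (X ^ 2 - C a * X) ^ (m + 1) = of _ a ^ m * root (X ^ 2 - C a * X) := by
  induction m with
  | zero => simp
  | succ m ih =>
    rw [pow_succ (root _), ih, mul_assoc, ← sq, root_sq_eq_of_mul_root, pow_succ (of _ a)]
    ring

theorem isUnit_one_add_root_mul {t : S} (h : IsUnit (1 + a * t)) :
    IsUnit (1 + root (X ^ 2 - C a * X) * of _ t) := by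
  obtain ⟨v, hv⟩ := h.exists_right_inv
  refine IsUnit.of_mul_eq_one (1 - root _ * of _ t * of _ v) ?_
  have hv' := congrArg (of (X ^ 2 - C a * X)) hv
  simp only [map_mul, map_add, map_one] at hv'
  linear_combination (-(of _ t) ^ 2 * of _ v) * root_sq_eq_of_mul_root (a := a) -
    root _ * of _ t * hv'

variable (φ : S →+* S) (μ : S) (hμ : φ a = μ * a)

noncomputable def frobeniusExtension :
    AdjoinRoot (X ^ 2 - C a * X) →+* AdjoinRoot (X ^ 2 - C a * X) :=
  lift ((of _).comp φ) (of _ μ * root _) <| by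
    simp only [eval₂_sub, eval₂_mul, eval₂_X_pow, eval₂_C, eval₂_X, RingHom.comp_apply, hμ,
      map_mul]
    linear_combination of _ μ ^ 2 * root_sq_eq_of_mul_root (a := a)

theorem frobeniusExtension_comp_of :
    (frobeniusExtension φ μ hμ).comp (of _) = (of _).comp φ := lift_comp_of _

theorem frobeniusExtension_root :
    frobeniusExtension φ μ hμ (root _) = of _ μ * root (X ^ 2 - C a * X) := lift_root _

theorem isFrobeniusLift_frobeniusExtension {p : ℕ} [Fact p.Prime] (hφ : IsFrobeniusLift p φ)
    (hμp : (p : S) ∣ μ - a ^ (p - 1)) : IsFrobeniusLift p (frobeniusExtension φ μ hμ) := by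
  refine hφ.adjoinRoot (frobeniusExtension_comp_of φ μ hμ) ?_
  obtain ⟨c, hc⟩ := hμp
  refine ⟨of _ c * root _, ?_⟩
  have hpow : root (X ^ 2 - C a * X) ^ p = of _ a ^ (p - 1) * root _ := by
    rw [← root_pow_succ_eq_of_pow_mul_root, Nat.sub_add_cancel (Fact.out : p.Prime).one_le]
  rw [frobeniusExtension_root, hpow, ← map_pow, ← sub_mul,
    ← map_sub, hc, map_mul, map_natCast, mul_assoc]

end AdjoinRoot

section QAnalogue

variable {A : Type*} [CommRing A]

theorem map_qan {B F : Type*} [CommRing B] [FunLike F A B] [RingHomClass F A B] (f : F) (t : A)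
    (n : ℕ) : f (qan t n) = qan (f t) n := by
  simp [qan]

theorem qan_mul_qan_pow (t : A) (a b : ℕ) : qan t a * qan (t ^ a) b = qan t (a * b) := by
  induction b with
  | zero => simp [qan]
  | succ b ih =>
    simp only [qan, Finset.sum_range_succ, Nat.mul_succ, Finset.sum_range_add] at ih ⊢
    rw [mul_add, ih, Finset.sum_mul]
    exact congrArg _ (Finset.sum_congr rfl fun i _ => by ring)

end QAnalogue

theorem Nat.sub_one_add_mul_sub_one {a b : ℕ} (hb : 1 ≤ b) : a - 1 + a * (b - 1) = a * b - 1 := by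
  obtain ⟨k, rfl⟩ := Nat.exists_eq_add_of_le' hb
  cases a
  · simp
  · simp [mul_add]; omega

section IntegerPolynomials

variable (p : ℕ) [Fact p.Prime]

theorem natCast_dvd_iff_map_zmod_eq_zero (f : ℤ[X]) :
    (p : ℤ[X]) ∣ f ↔ f.map (Int.castRingHom (ZMod p)) = 0 := by
  rw [← map_natCast C, C_dvd_iff_dvd_coeff, Polynomial.ext_iff]
  simp [ZMod.intCast_zmod_eq_zero_iff_dvd]

theorem isFrobeniusLift_expand : IsFrobeniusLift p (expand ℤ p : ℤ[X] →+* ℤ[X]) := fun f => by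
  rw [natCast_dvd_iff_map_zmod_eq_zero]
  simp [Polynomial.map_expand, ZMod.expand_card]

theorem natCast_dvd_qan_X_sub_X_sub_one_pow : (p : ℤ[X]) ∣ qan X p - (X - 1) ^ (p - 1) := by
  have hp := (Fact.out : p.Prime).one_le
  rw [natCast_dvd_iff_map_zmod_eq_zero, Polynomial.map_sub, sub_eq_zero]
  refine mul_right_cancel₀ (X_sub_C_ne_zero (1 : ZMod p)) ?_
  simp only [qan, Polynomial.map_sum, Polynomial.map_X, Polynomial.map_pow, Polynomial.map_sub,
    Polynomial.map_one, C_1, ← pow_succ, Nat.sub_add_cancel hp, sub_pow_char, one_pow]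
  exact geom_sum_mul X p

end IntegerPolynomials

section ModelPolynomials

variable (p α : ℕ)

noncomputable def lamPoly : ℤ[X] := X * (X ^ p ^ α - 1)

noncomputable def muPoly : ℤ[X] := X ^ (p - 1) * qan (X ^ p ^ α) p

noncomputable def tSumPoly (n : ℕ) : ℤ[X] :=
  ∑ i ∈ Finset.Icc 1 (p - 1), X ^ (i * p ^ (n + α) - 1) * qan (X ^ p ^ (α + n + 1)) (i * p ^ α)

noncomputable def tPoly (n : ℕ) : ℤ[X] := qan (X ^ p ^ α) (p ^ n) * tSumPoly p α n

theorem eval_one_lamPoly : (lamPoly p α).eval 1 = 0 := by simp [lamPoly]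

variable [Fact p.Prime]

theorem expand_lamPoly : expand ℤ p (lamPoly p α) = muPoly p α * lamPoly p α := by
  have hp := (Fact.out : p.Prime).one_le
  have hgeom : qan ((X : ℤ[X]) ^ p ^ α) p * (X ^ p ^ α - 1) = X ^ (p ^ α * p) - 1 := by
    rw [qan, geom_sum_mul, pow_mul]
  have hX : (X : ℤ[X]) ^ p = X ^ (p - 1) * X := by rw [← pow_succ, Nat.sub_add_cancel hp]
  rw [lamPoly, muPoly, map_mul, map_sub, map_pow, expand_X, map_one, ← pow_mul, mul_comm p (p ^ α),
    ← hgeom, hX]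
  ring

theorem natCast_dvd_muPoly_sub_lamPoly_pow : (p : ℤ[X]) ∣ muPoly p α - lamPoly p α ^ (p - 1) := by
  have h := map_dvd (expand ℤ (p ^ α)) (natCast_dvd_qan_X_sub_X_sub_one_pow p)
  rw [map_natCast, map_sub, map_qan, map_pow, map_sub, expand_X, map_one] at h
  rw [muPoly, lamPoly, mul_pow, ← mul_sub]
  exact h.mul_left _

theorem X_pow_mul_expand_tSumPoly (n : ℕ) :
    X ^ (p - 1) * expand ℤ p (tSumPoly p α n) = tSumPoly p α (n + 1) := by
  rw [tSumPoly, tSumPoly, map_sum, Finset.mul_sum]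
  refine Finset.sum_congr rfl fun i hi => ?_
  have hi : 1 ≤ i * p ^ (n + α) :=
    Nat.mul_pos (Finset.mem_Icc.mp hi).1 (pow_pos (Fact.out : p.Prime).pos _)
  rw [map_mul, map_pow, map_qan, map_pow, expand_X, ← pow_mul, ← pow_mul, ← mul_assoc, ← pow_add,
    Nat.sub_one_add_mul_sub_one hi, ← pow_succ', mul_left_comm, ← pow_succ', add_right_comm n 1 α,
    ← add_assoc α n 1]

theorem muPoly_mul_expand_tPoly (n : ℕ) :
    muPoly p α * expand ℤ p (tPoly p α n) = tPoly p α (n + 1) := by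
  rw [tPoly, tPoly, muPoly, map_mul, map_qan, map_pow, expand_X, pow_right_comm,
    ← X_pow_mul_expand_tSumPoly, pow_succ', ← qan_mul_qan_pow]
  ring

end ModelPolynomials

section Model

/-- Polynomials with `f(1) = 1` become units of `A` under `X ↦ q`; inverting them makes `g₀`
invertible while keeping the Frobenius lift `X ↦ X ^ p`. -/
def evalOneSubmonoid : Submonoid ℤ[X] where
  carrier := {f | f.eval 1 = 1}
  mul_mem' hf hg := by simp_all
  one_mem' := eval_one

abbrev ModelBase := Localization evalOneSubmonoid

variable (p α : ℕ)

theorem evalOneSubmonoid_le_comap_expand :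
    evalOneSubmonoid ≤ evalOneSubmonoid.comap (expand ℤ p : ℤ[X] →+* ℤ[X]) := fun f hf => by
  simpa [evalOneSubmonoid, expand_eval] using hf

noncomputable def frobeniusModelBase : ModelBase →+* ModelBase :=
  IsLocalization.map _ (expand ℤ p : ℤ[X] →+* ℤ[X]) (evalOneSubmonoid_le_comap_expand p)

theorem frobeniusModelBase_algebraMap (f : ℤ[X]) :
    frobeniusModelBase p (algebraMap ℤ[X] ModelBase f) = algebraMap ℤ[X] ModelBase (expand ℤ p f) :=
  IsLocalization.map_eq _ _

abbrev Model := AdjoinRoot (X ^ 2 - C (algebraMap ℤ[X] ModelBase (lamPoly p α)) * X)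

noncomputable def gModel (n : ℕ) : Model p α :=
  1 + AdjoinRoot.root _ * AdjoinRoot.of _ (algebraMap ℤ[X] ModelBase (tPoly p α n))

theorem isUnit_gModel_zero : IsUnit (gModel p α 0) := by
  refine AdjoinRoot.isUnit_one_add_root_mul ?_
  rw [← map_mul, ← map_one (algebraMap ℤ[X] ModelBase), ← map_add]
  refine IsLocalization.map_units ModelBase (⟨_, ?_⟩ : evalOneSubmonoid)
  simp [evalOneSubmonoid, eval_one_lamPoly]

variable [Fact p.Prime]

noncomputable def frobeniusModel : Model p α →+* Model p α :=
  AdjoinRoot.frobeniusExtension (frobeniusModelBase p) (algebraMap ℤ[X] ModelBase (muPoly p α))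
    (by rw [frobeniusModelBase_algebraMap, expand_lamPoly, map_mul])

theorem isFrobeniusLift_frobeniusModel : IsFrobeniusLift p (frobeniusModel p α) := by
  refine AdjoinRoot.isFrobeniusLift_frobeniusExtension _ _ _
    ((isFrobeniusLift_expand p).isLocalization_map _) ?_
  obtain ⟨c, hc⟩ := natCast_dvd_muPoly_sub_lamPoly_pow p α
  exact ⟨algebraMap ℤ[X] ModelBase c, by rw [← map_pow, ← map_sub, hc, map_mul, map_natCast]⟩

theorem iterate_frobeniusModel_gModel_zero (n : ℕ) :
    (frobeniusModel p α)^[n] (gModel p α 0) = gModel p α n := by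
  induction n with
  | zero => rfl
  | succ n ih =>
    rw [Function.iterate_succ_apply', ih, gModel, gModel, map_add, map_one, map_mul,
      frobeniusModel, AdjoinRoot.frobeniusExtension_root, ← RingHom.comp_apply _ (AdjoinRoot.of _),
      AdjoinRoot.frobeniusExtension_comp_of, RingHom.comp_apply, frobeniusModelBase_algebraMap,
      ← muPoly_mul_expand_tPoly, map_mul, map_mul]
    ring

end Model

section Specialization

variable (p α : ℕ) [Fact p.Prime] (k : Type*) [CommRing k]

theorem isUnit_aeval_qq {f : ℤ[X]} (hf : f ∈ evalOneSubmonoid) : IsUnit (aeval (qq p k) f) := by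
  rw [PowerSeries.isUnit_iff_constantCoeff, aeval_def, hom_eval₂, show PowerSeries.constantCoeff
    (qq p k) = 1 by simp [qq], eval₂_at_one, show f.eval 1 = 1 from hf, map_one]
  exact isUnit_one

noncomputable def modelBaseMap : ModelBase →+* PowerSeries (WittVector p k) :=
  IsLocalization.lift (M := evalOneSubmonoid) (g := (aeval (qq p k)).toRingHom)
    fun f => isUnit_aeval_qq p k f.2

theorem modelBaseMap_algebraMap (f : ℤ[X]) :
    modelBaseMap p k (algebraMap ℤ[X] ModelBase f) = aeval (qq p k) f :=
  IsLocalization.lift_eq _ _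

noncomputable def modelMap : Model p α →+* Rring p α k :=
  AdjoinRoot.map (modelBaseMap p k) _ (relPoly p α k) <| dvd_of_eq <| by
    simp [relPoly, modelBaseMap_algebraMap, lamPoly]

theorem modelMap_gModel (n : ℕ) :
    modelMap p α k (gModel p α n) =
      1 + eps p α k *
        algebraMap _ _ (qan ((qq p k) ^ p ^ α) (p ^ n) *
          ∑ i ∈ Finset.Icc 1 (p - 1),
            (qq p k) ^ (i * p ^ (n + α) - 1) * qan ((qq p k) ^ p ^ (α + n + 1)) (i * p ^ α)) := by
  simp [modelMap, gModel, modelBaseMap_algebraMap, tPoly, tSumPoly, map_qan, eps,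
    AdjoinRoot.algebraMap_eq]

end Specialization

theorem isLeftRegular_natCast_rring (p α : ℕ) [Fact p.Prime] (k : Type*) [Field k] [CharP k p] :
    IsLeftRegular (p : Rring p α k) := by
  have : Module.Free (PowerSeries (WittVector p k)) (Rring p α k) :=
    (monic_X_pow_sub (degree_C_mul_X_le _ |>.trans_lt (by norm_num))).free_adjoinRoot
  have hp : (p : PowerSeries (WittVector p k)) ≠ 0 := fun h =>
    WittVector.p_nonzero p k (by simpa using congrArg PowerSeries.constantCoeff h)
  intro x y hxy
  exact (IsRegular.of_ne_zero hp).isSMulRegular (M := Rring p α k)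
    (by simpa [Algebra.smul_def] using hxy)

theorem stmt4_general (p : ℕ) [Fact p.Prime] (α : ℕ)
    (k : Type*) [Field k] [CharP k p] :
    (∃! b : WittVector p (Rring p α k), ∀ n : ℕ,
      WittVector.ghostComponent n b =
        1 + eps p α k *
          algebraMap _ _ (qan ((qq p k) ^ p ^ α) (p ^ n) *
            ∑ i ∈ Finset.Icc 1 (p - 1),
              (qq p k) ^ (i * p ^ (n + α) - 1) *
                qan ((qq p k) ^ p ^ (α + n + 1)) (i * p ^ α))) ∧
    (∀ b : WittVector p (Rring p α k), (∀ n : ℕ,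
      WittVector.ghostComponent n b =
        1 + eps p α k *
          algebraMap _ _ (qan ((qq p k) ^ p ^ α) (p ^ n) *
            ∑ i ∈ Finset.Icc 1 (p - 1),
              (qq p k) ^ (i * p ^ (n + α) - 1) *
                qan ((qq p k) ^ p ^ (α + n + 1)) (i * p ^ α))) → IsUnit b) := by
  have hreg := isLeftRegular_natCast_rring p α k
  obtain ⟨b, hunit, hb⟩ := WittVector.exists_isUnit_ghostComponent_eq_map_iterate
    (isFrobeniusLift_frobeniusModel p α) (modelMap p α k) hreg (isUnit_gModel_zero p α)
  simp only [iterate_frobeniusModel_gModel_zero, modelMap_gModel] at hb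
  have hunique : ∀ b' : WittVector p (Rring p α k),
      (∀ n, WittVector.ghostComponent n b' = WittVector.ghostComponent n b) → b' = b :=
    fun _ => WittVector.ext_ghostComponent hreg
  refine ⟨⟨b, hb, fun b' hb' => hunique b' fun n => by rw [hb', hb]⟩, fun b' hb' => ?_⟩
  rwa [hunique b' fun n => by rw [hb', hb]]

/-- There exists a unique Witt vector `b ∈ 𝕎(R)` whose `n`-th ghost
component is `1 + ε·[p^n]_{q^{p^α}}·∑_{i=1}^{p−1} q^{i·p^{n+α}−1}·[i·p^α]_{q^{p^{α+n+1}}}`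
for every `n ≥ 0`; moreover any such `b` is a unit of `𝕎(R)`. -/
theorem stmt4 (p : ℕ) [Fact p.Prime] (α : ℕ)
    (k : Type*) [Field k] [CharP k p] [PerfectRing k p] :
    (∃! b : WittVector p (Rring p α k), ∀ n : ℕ,
      WittVector.ghostComponent n b =
        1 + eps p α k *
          algebraMap _ _ (qan ((qq p k) ^ p ^ α) (p ^ n) *
            ∑ i ∈ Finset.Icc 1 (p - 1),
              (qq p k) ^ (i * p ^ (n + α) - 1) *
                qan ((qq p k) ^ p ^ (α + n + 1)) (i * p ^ α))) ∧
    (∀ b : WittVector p (Rring p α k), (∀ n : ℕ,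
      WittVector.ghostComponent n b =
        1 + eps p α k *
          algebraMap _ _ (qan ((qq p k) ^ p ^ α) (p ^ n) *
            ∑ i ∈ Finset.Icc 1 (p - 1),
              (qq p k) ^ (i * p ^ (n + α) - 1) *
                qan ((qq p k) ^ p ^ (α + n + 1)) (i * p ^ α))) → IsUnit b) :=
  stmt4_general p α k
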